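/- Let G = (V,E) be a finite simple graph, let φ ≥ 0 be a real number, and let σ be a uniformly random linear order on E. Fix a vertex v and a function f : L_2(v) → L_1(v) such that f(w) is adjacent to w for every w ∈ L_2(v). Then the expected number of vertices w ∈ L_2(v) such that the edge {f(w), w} is settled for f(w) is at least |L_2(v)|/(1+φ). In particular, E[1 + |L_1(v)| + #{w ∈ L_2(v) : {f(w),w} is settled for f(w)}] ≥ |B_2(v)|/(1+φ). -/

import Mathlib

/-- The set of vertices at graph distance exactly `h` from `u`. -/
def graphSphere {V : Type*} (G : SimpleGraph V) (u : V) (h : ℕ) : Set V :=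
  {v | G.Reachable u v ∧ G.dist u v = h}

/-- The set of vertices at graph distance at most `h` from `u`. -/
def graphBall {V : Type*} (G : SimpleGraph V) (u : V) (h : ℕ) : Set V :=
  {v | G.Reachable u v ∧ G.dist u v ≤ h}

/-- A graph is locally `γ`-sparse if for every vertex `u`:
(i) every `v ∈ L_1(u)` has degree at most `γ` in the subgraph induced by `L_1(u)`, and
(ii) every `w ∈ L_2(u)` has degree at most `γ + 1` in the subgraph induced by `L_1(u) ∪ {w}`. -/
def LocallySparse {V : Type*} (G : SimpleGraph V) (γ : ℕ) : Prop :=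
  ∀ u : V,
    (∀ v ∈ graphSphere G u 1, (G.neighborSet v ∩ graphSphere G u 1).ncard ≤ γ) ∧
    (∀ w ∈ graphSphere G u 2, (G.neighborSet w ∩ graphSphere G u 1).ncard ≤ γ + 1)

/-- An edge `e` (incident to `x`) is *settled* for `x` under the linear order `σ` on the
edge set if at most `deg(x) − ⌊φ·deg(x)/(1+φ)⌋` edges incident to `x` have `σ`-value at
most that of `e`. -/
def Settled {V : Type*} [Fintype V] [DecidableEq V] (G : SimpleGraph V)
    [DecidableRel G.Adj] (φ : ℝ) (σ : G.edgeSet ≃ Fin G.edgeFinset.card)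
    (x : V) (e : G.edgeSet) : Prop :=
  (Finset.univ.filter fun e' : G.edgeSet =>
      x ∈ (e' : Sym2 V) ∧ (σ e' : ℕ) ≤ (σ e : ℕ)).card
    ≤ G.degree x - ⌊φ * (G.degree x : ℝ) / (1 + φ)⌋₊

/-!
Let `x` be an endpoint of an edge `e`, of degree `d`, and `k = d - ⌊φd/(1+φ)⌋₊`. Precomposing
the order with the transposition of two edges at `x` shows that all edges at `x` are equally
likely to have rank at most `k` among the edges at `x`; since every order has exactly `k` such
edges, `e` is settled for `x` with probability `k/d ≥ 1/(1+φ)`. Summing over `w ∈ L₂(v)` gives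
the first bound, and `|B₂(v)| ≤ 1 + |L₁(v)| + |L₂(v)|` the second.
-/

open Finset

section OrderRank

variable {α : Type*} {m : ℕ}

def orderRank [DecidableEq α] (σ : α ≃ Fin m) (A : Finset α) (a : α) : ℕ :=
  #{b ∈ A | (σ b : ℕ) ≤ σ a}

variable [DecidableEq α] (σ : α ≃ Fin m) (A : Finset α)

lemma orderRank_lt_orderRank {a b : α} (hb : b ∈ A) (h : (σ a : ℕ) < σ b) :
    orderRank σ A a < orderRank σ A b := by
  refine card_lt_card ⟨monotone_filter_right A fun c _ hc => hc.trans h.le, fun hsub => ?_⟩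
  have := (mem_filter.mp (hsub (mem_filter.mpr ⟨hb, le_rfl⟩))).2
  omega

lemma orderRank_injOn : Set.InjOn (orderRank σ A) A := by
  intro a ha b hb hab
  by_contra hne
  rcases lt_or_gt_of_ne (Fin.val_ne_of_ne (σ.injective.ne hne)) with h | h
  · exact (orderRank_lt_orderRank σ A hb h).ne hab
  · exact (orderRank_lt_orderRank σ A ha h).ne' hab

lemma orderRank_mem_Icc {a : α} (ha : a ∈ A) : orderRank σ A a ∈ Icc 1 #A :=
  mem_Icc.mpr ⟨card_pos.mpr ⟨a, mem_filter.mpr ⟨ha, le_rfl⟩⟩, card_filter_le _ _⟩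

lemma image_orderRank : A.image (orderRank σ A) = Icc 1 #A :=
  eq_of_subset_of_card_le (image_subset_iff.mpr fun _ => orderRank_mem_Icc σ A)
    (by rw [Nat.card_Icc, card_image_of_injOn (orderRank_injOn σ A)]; omega)

lemma card_filter_orderRank_le {k : ℕ} (hk : k ≤ #A) : #{a ∈ A | orderRank σ A a ≤ k} = k := by
  have hfilter : {j ∈ Icc 1 #A | j ≤ k} = Icc 1 k := by
    ext j; simp only [mem_filter, mem_Icc]; omega
  rw [← card_image_of_injOn ((orderRank_injOn σ A).mono (filter_subset _ _)),
    ← filter_image (p := (· ≤ k)), image_orderRank, hfilter, Nat.card_Icc, Nat.add_sub_cancel]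

lemma orderRank_perm_trans {π : Equiv.Perm α} (hπ : ∀ b, b ∈ A ↔ π b ∈ A) (a : α) :
    orderRank (π.trans σ) A a = orderRank σ A (π a) :=
  card_equiv π fun b => by rw [mem_filter, mem_filter, hπ b]; rfl

lemma mem_iff_swap_apply_mem {e a : α} (he : e ∈ A) (ha : a ∈ A) (b : α) :
    b ∈ A ↔ Equiv.swap e a b ∈ A := by
  rw [Equiv.swap_apply_def]
  split_ifs <;> simp_all

variable {A} [Fintype α]

lemma card_orderRank_le_eq {a e : α} (ha : a ∈ A) (he : e ∈ A) (k : ℕ) :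
    #{σ : α ≃ Fin m | orderRank σ A a ≤ k} = #{σ : α ≃ Fin m | orderRank σ A e ≤ k} := by
  have hrank (σ : α ≃ Fin m) {x y : α} (hx : x ∈ A) (hy : y ∈ A) :
      orderRank ((Equiv.swap x y).trans σ) A x = orderRank σ A y := by
    rw [orderRank_perm_trans σ A (mem_iff_swap_apply_mem A hx hy), Equiv.swap_apply_left]
  refine card_nbij' ((Equiv.swap e a).trans ·) ((Equiv.swap e a).trans ·) ?_ ?_ ?_ ?_
  · intro σ hσ
    simpa [hrank σ he ha] using hσ
  · intro σ hσ
    simpa [Equiv.swap_comm e a, hrank σ ha he] using hσ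
  all_goals intro σ _; ext; simp

lemma mul_card_eq_card_mul_card_orderRank_le {e : α} (he : e ∈ A) {k : ℕ} (hk : k ≤ #A) :
    k * Fintype.card (α ≃ Fin m) = #A * #{σ : α ≃ Fin m | orderRank σ A e ≤ k} :=
  calc k * Fintype.card (α ≃ Fin m)
      = ∑ σ : α ≃ Fin m, #{a ∈ A | orderRank σ A a ≤ k} := by
        simp [card_filter_orderRank_le _ _ hk, mul_comm]
    _ = ∑ a ∈ A, #{σ : α ≃ Fin m | orderRank σ A a ≤ k} :=
        sum_card_bipartiteAbove_eq_sum_card_bipartiteBelow _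
    _ = #A * #{σ : α ≃ Fin m | orderRank σ A e ≤ k} := by
        rw [sum_congr rfl fun a ha => card_orderRank_le_eq ha he k, sum_const, smul_eq_mul]

end OrderRank

lemma le_sub_floor_mul_one_add {φ : ℝ} (hφ : 0 ≤ φ) (d : ℕ) :
    (d : ℝ) ≤ ((d - ⌊φ * d / (1 + φ)⌋₊ : ℕ) : ℝ) * (1 + φ) := by
  have h1φ : 0 < 1 + φ := by linarith
  have hfloor : (⌊φ * d / (1 + φ)⌋₊ : ℝ) ≤ φ * d / (1 + φ) := Nat.floor_le (by positivity)
  have hle : φ * d / (1 + φ) ≤ d := by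
    rw [div_le_iff₀ h1φ]; nlinarith [(Nat.cast_nonneg d : (0 : ℝ) ≤ d)]
  rw [Nat.cast_sub (by exact_mod_cast hfloor.trans hle)]
  have : φ * d / (1 + φ) * (1 + φ) = φ * d := div_mul_cancel₀ _ h1φ.ne'
  nlinarith

namespace SimpleGraph

variable {V : Type*} [Fintype V] [DecidableEq V] (G : SimpleGraph V) [DecidableRel G.Adj]

lemma card_filter_mem_edgeSet (x : V) :
    #{e : G.edgeSet | x ∈ (e : Sym2 V)} = G.degree x := by
  rw [← card_incidenceFinset_eq_degree, ← card_map (Function.Embedding.subtype _)]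
  congr 1
  ext e
  simp [incidenceSet, and_comm]

noncomputable instance (φ : ℝ) (σ : G.edgeSet ≃ Fin G.edgeFinset.card) (x : V) (e : G.edgeSet) :
    Decidable (Settled G φ σ x e) :=
  inferInstanceAs (Decidable (_ ≤ _))

lemma settled_iff_orderRank_le (φ : ℝ) (σ : G.edgeSet ≃ Fin G.edgeFinset.card) (x : V)
    (e : G.edgeSet) :
    Settled G φ σ x e ↔ orderRank σ {e' : G.edgeSet | x ∈ (e' : Sym2 V)} e
      ≤ G.degree x - ⌊φ * G.degree x / (1 + φ)⌋₊ := by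
  rw [Settled, orderRank, filter_filter]

lemma card_div_one_add_le_card_settled {φ : ℝ} (hφ : 0 ≤ φ) {x : V} {e : G.edgeSet}
    (hx : x ∈ (e : Sym2 V)) :
    (Fintype.card (G.edgeSet ≃ Fin G.edgeFinset.card) : ℝ) / (1 + φ)
      ≤ #{σ : G.edgeSet ≃ Fin G.edgeFinset.card | Settled G φ σ x e} := by
  set A : Finset G.edgeSet := {e' : G.edgeSet | x ∈ (e' : Sym2 V)}
  set d := G.degree x
  set k := d - ⌊φ * d / (1 + φ)⌋₊
  have heA : e ∈ A := mem_filter.mpr ⟨mem_univ e, hx⟩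
  have hA : #A = d := G.card_filter_mem_edgeSet x
  have hd : (0 : ℝ) < d := by exact_mod_cast hA ▸ card_pos.mpr ⟨e, heA⟩
  have hcount : (k : ℝ) * Fintype.card (G.edgeSet ≃ Fin G.edgeFinset.card)
      = d * #{σ : G.edgeSet ≃ Fin G.edgeFinset.card | Settled G φ σ x e} := by
    have h := mul_card_eq_card_mul_card_orderRank_le (m := G.edgeFinset.card) heA (k := k)
      (by omega)
    rw [hA] at h
    simp only [settled_iff_orderRank_le]
    exact_mod_cast h
  rw [div_le_iff₀ (by linarith), ← mul_le_mul_iff_right₀ hd]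
  calc (d : ℝ) * Fintype.card (G.edgeSet ≃ Fin G.edgeFinset.card)
      ≤ k * (1 + φ) * Fintype.card (G.edgeSet ≃ Fin G.edgeFinset.card) :=
        mul_le_mul_of_nonneg_right (le_sub_floor_mul_one_add hφ d) (Nat.cast_nonneg _)
    _ = _ := by rw [mul_right_comm, hcount, mul_assoc]

lemma card_mul_div_le_sum_ncard_settled {φ : ℝ} (hφ : 0 ≤ φ) (f : V → V) (S : Set V)
    (hf : ∀ w ∈ S, G.Adj (f w) w) :
    (S.ncard : ℝ) * Fintype.card (G.edgeSet ≃ Fin G.edgeFinset.card) / (1 + φ)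
      ≤ ∑ σ : G.edgeSet ≃ Fin G.edgeFinset.card,
          (({w ∈ S | ∃ e : G.edgeSet, (e : Sym2 V) = s(f w, w) ∧ Settled G φ σ (f w) e}).ncard
            : ℝ) := by
  classical
  set P : (G.edgeSet ≃ Fin G.edgeFinset.card) → V → Prop :=
    fun σ w => ∃ e : G.edgeSet, (e : Sym2 V) = s(f w, w) ∧ Settled G φ σ (f w) e
  have hncard (σ) : {w ∈ S | P σ w}.ncard = #{w ∈ S.toFinset | P σ w} := by
    rw [← Set.ncard_coe_finset]; congr; ext; simp
  have hsettled (w) (hw : w ∈ S.toFinset) :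
      (Fintype.card (G.edgeSet ≃ Fin G.edgeFinset.card) : ℝ) / (1 + φ)
        ≤ #{σ : G.edgeSet ≃ Fin G.edgeFinset.card | P σ w} := by
    let ew : G.edgeSet := ⟨s(f w, w), hf w (Set.mem_toFinset.mp hw)⟩
    refine (G.card_div_one_add_le_card_settled hφ (e := ew) (Sym2.mem_mk_left _ _)).trans ?_
    exact_mod_cast card_le_card
      (monotone_filter_right _ fun σ _ hσ => show P σ w from ⟨ew, rfl, hσ⟩)
  calc (S.ncard : ℝ) * Fintype.card (G.edgeSet ≃ Fin G.edgeFinset.card) / (1 + φ)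
      = ∑ _w ∈ S.toFinset, (Fintype.card (G.edgeSet ≃ Fin G.edgeFinset.card) : ℝ) / (1 + φ) := by
        rw [sum_const, Set.ncard_eq_toFinset_card', nsmul_eq_mul, mul_div_assoc]
    _ ≤ ∑ w ∈ S.toFinset, (#{σ : G.edgeSet ≃ Fin G.edgeFinset.card | P σ w} : ℝ) :=
        sum_le_sum hsettled
    _ = ∑ σ : G.edgeSet ≃ Fin G.edgeFinset.card, (#{w ∈ S.toFinset | P σ w} : ℝ) := by
        exact_mod_cast (sum_card_bipartiteAbove_eq_sum_card_bipartiteBelow _).symm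
    _ = _ := sum_congr rfl fun σ _ => congrArg Nat.cast (hncard σ).symm

end SimpleGraph

lemma graphBall_zero {V : Type*} (G : SimpleGraph V) (u : V) : graphBall G u 0 = {u} := by
  ext w
  simp only [graphBall, nonpos_iff_eq_zero, Set.mem_ofPred_eq, Set.mem_singleton_iff]
  constructor
  · rintro ⟨hr, h0⟩
    exact ((SimpleGraph.dist_eq_zero_iff_eq_or_not_reachable.mp h0).resolve_right
      (not_not.mpr hr)).symm
  · rintro rfl
    exact ⟨SimpleGraph.Reachable.refl _, SimpleGraph.dist_self⟩

lemma graphBall_succ {V : Type*} (G : SimpleGraph V) (u : V) (h : ℕ) :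
    graphBall G u (h + 1) = graphBall G u h ∪ graphSphere G u (h + 1) := by
  ext w
  simp only [graphBall, graphSphere, Set.mem_union, Set.mem_ofPred_eq]
  by_cases hr : G.Reachable u w
  · simp only [hr, true_and]; omega
  · simp only [hr, false_and, or_false]

lemma ncard_graphBall_succ_le {V : Type*} (G : SimpleGraph V) (u : V) (h : ℕ) :
    (graphBall G u (h + 1)).ncard ≤ (graphBall G u h).ncard + (graphSphere G u (h + 1)).ncard :=
  graphBall_succ G u h ▸ Set.ncard_union_le _ _

lemma ncard_graphBall_two_le {V : Type*} (G : SimpleGraph V) (u : V) :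
    (graphBall G u 2).ncard ≤ 1 + (graphSphere G u 1).ncard + (graphSphere G u 2).ncard := by
  have h1 : (graphBall G u 1).ncard ≤ (graphBall G u 0).ncard + (graphSphere G u 1).ncard :=
    ncard_graphBall_succ_le G u 0
  have h2 : (graphBall G u 2).ncard ≤ (graphBall G u 1).ncard + (graphSphere G u 2).ncard :=
    ncard_graphBall_succ_le G u 1
  rw [graphBall_zero, Set.ncard_singleton] at h1
  omega

theorem stmt_9_general {V : Type*} [Fintype V] [DecidableEq V] (G : SimpleGraph V)
    [DecidableRel G.Adj] (φ : ℝ) (hφ : 0 ≤ φ) (v : V) (f : V → V)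
    (hf2 : ∀ w ∈ graphSphere G v 2, G.Adj (f w) w) :
    (((graphSphere G v 2).ncard : ℝ) / (1 + φ)
      ≤ (∑ σ : G.edgeSet ≃ Fin G.edgeFinset.card,
          (({w ∈ graphSphere G v 2 |
              ∃ e : G.edgeSet, (e : Sym2 V) = s(f w, w) ∧ Settled G φ σ (f w) e}).ncard : ℝ))
        / (Fintype.card (G.edgeSet ≃ Fin G.edgeFinset.card) : ℝ)) ∧
    (((graphBall G v 2).ncard : ℝ) / (1 + φ)
      ≤ (∑ σ : G.edgeSet ≃ Fin G.edgeFinset.card,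
          ((1 : ℝ) + ((graphSphere G v 1).ncard : ℝ) +
            (({w ∈ graphSphere G v 2 |
              ∃ e : G.edgeSet, (e : Sym2 V) = s(f w, w) ∧ Settled G φ σ (f w) e}).ncard : ℝ)))
        / (Fintype.card (G.edgeSet ≃ Fin G.edgeFinset.card) : ℝ)) := by
  have hN : (0 : ℝ) < Fintype.card (G.edgeSet ≃ Fin G.edgeFinset.card) := by
    exact_mod_cast Fintype.card_pos_iff.mpr ⟨Fintype.equivFinOfCardEq G.edgeFinset_card.symm⟩
  have hsphere := G.card_mul_div_le_sum_ncard_settled hφ f _ hf2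
  rw [mul_div_right_comm, ← le_div_iff₀ hN] at hsphere
  refine ⟨hsphere, ?_⟩
  have hball : ((graphBall G v 2).ncard : ℝ)
      ≤ 1 + (graphSphere G v 1).ncard + (graphSphere G v 2).ncard := by
    exact_mod_cast ncard_graphBall_two_le G v
  rw [sum_add_distrib, sum_const, card_univ, nsmul_eq_mul, add_div, mul_div_cancel_left₀ _ hN.ne']
  calc ((graphBall G v 2).ncard : ℝ) / (1 + φ)
      ≤ (1 + (graphSphere G v 1).ncard) / (1 + φ) + (graphSphere G v 2).ncard / (1 + φ) := by
        rw [← add_div]; gcongr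
    _ ≤ _ := by gcongr; exact div_le_self (by positivity) (by linarith)

/-- For a uniformly random linear order `σ` on the edges of `G`, a vertex
`v` and a map `f : L_2(v) → L_1(v)` with `f w` adjacent to `w`, the expected number of
`w ∈ L_2(v)` whose edge `{f w, w}` is settled for `f w` is at least `|L_2(v)|/(1+φ)`;
in particular `E[1 + |L_1(v)| + #settled] ≥ |B_2(v)|/(1+φ)`. -/
theorem stmt_9 {V : Type*} [Fintype V] [DecidableEq V] (G : SimpleGraph V)
    [DecidableRel G.Adj] (φ : ℝ) (hφ : 0 ≤ φ) (v : V) (f : V → V)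
    (hf1 : ∀ w ∈ graphSphere G v 2, f w ∈ graphSphere G v 1)
    (hf2 : ∀ w ∈ graphSphere G v 2, G.Adj (f w) w) :
    (((graphSphere G v 2).ncard : ℝ) / (1 + φ)
      ≤ (∑ σ : G.edgeSet ≃ Fin G.edgeFinset.card,
          (({w ∈ graphSphere G v 2 |
              ∃ e : G.edgeSet, (e : Sym2 V) = s(f w, w) ∧ Settled G φ σ (f w) e}).ncard : ℝ))
        / (Fintype.card (G.edgeSet ≃ Fin G.edgeFinset.card) : ℝ)) ∧
    (((graphBall G v 2).ncard : ℝ) / (1 + φ)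
      ≤ (∑ σ : G.edgeSet ≃ Fin G.edgeFinset.card,
          ((1 : ℝ) + ((graphSphere G v 1).ncard : ℝ) +
            (({w ∈ graphSphere G v 2 |
              ∃ e : G.edgeSet, (e : Sym2 V) = s(f w, w) ∧ Settled G φ σ (f w) e}).ncard : ℝ)))
        / (Fintype.card (G.edgeSet ≃ Fin G.edgeFinset.card) : ℝ)) :=
  stmt_9_general G φ hφ v f hf2
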